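/- arXiv:1206.0887 — 2 statements merged into one kernel-verified Lean document; each statement's English description precedes it below -/
import Mathlib

section
/- Let V be an n-dimensional vector space over ℤ/2, b : V × V → ℤ/2 a symmetric bilinear form with b(v,v) = 0 for all v, A(V,b) the associated intersection algebra, and Q the (nonempty, finite) set of quadratic refinements of b. Then the ℂ-linear map A(V,b) → ℂ^Q sending the basis element [v] to the tuple ((−1)^{q(v)})_{q ∈ Q} is an isomorphism of unital ℂ-algebras, where ℂ^Q carries the componentwise product. -/
/-!
A quadratic refinement exists (take `q v = B v v` for the strictly upper-triangular half `B`
of `b` in a basis), and any two differ by a linear functional, so `Q` is a torsor under the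
dual `V*` and `|Q| = |V|`. Under this identification `q ↦ (-1)^{q v}` becomes a nonzero
multiple of the character `ℓ ↦ (-1)^{ℓ v}` of `V*`; distinct `v` give distinct characters,
so by Dedekind's lemma the images of the basis `[v]` are linearly independent, and a dimension
count gives bijectivity. Multiplicativity on basis elements is the refinement identity
`(-1)^{b(u,v)} (-1)^{q(u+v)} = (-1)^{q u} (-1)^{q v}`.
-/

/-- The sign `(-1)^x ∈ ℂ` attached to `x ∈ ℤ/2`. -/
noncomputable def sgnC (x : ZMod 2) : ℂ := if x = 0 then 1 else -1

lemma ZMod.eq_zero_or_eq_one (a : ZMod 2) : a = 0 ∨ a = 1 := by revert a; decide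

lemma sgnC_add (x y : ZMod 2) : sgnC (x + y) = sgnC x * sgnC y := by
  rcases x.eq_zero_or_eq_one with rfl | rfl <;> rcases y.eq_zero_or_eq_one with rfl | rfl <;>
    simp [sgnC, CharTwo.add_self_eq_zero]

lemma sgnC_injective : Function.Injective sgnC := by
  intro x y h
  rcases x.eq_zero_or_eq_one with rfl | rfl <;> rcases y.eq_zero_or_eq_one with rfl | rfl <;>
    norm_num [sgnC] at h <;> rfl

lemma sgnC_mul_self (x : ZMod 2) : sgnC x * sgnC x = 1 := by
  rw [← sgnC_add, CharTwo.add_self_eq_zero]; simp [sgnC]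

lemma sgnC_ne_zero (x : ZMod 2) : sgnC x ≠ 0 :=
  left_ne_zero_of_mul_eq_one (sgnC_mul_self x)

noncomputable def sgnChar : AddChar (ZMod 2) ℂ where
  toFun := sgnC
  map_zero_eq_one' := by simp [sgnC]
  map_add_eq_mul' := sgnC_add

theorem Finsupp.map_bilin_eq_mul_of_single {ι R B : Type*} [CommSemiring R]
    [NonUnitalNonAssocSemiring B] [Module R B] [IsScalarTower R B B] [SMulCommClass R B B]
    (mul : (ι →₀ R) →ₗ[R] (ι →₀ R) →ₗ[R] (ι →₀ R)) (Φ : (ι →₀ R) →ₗ[R] B)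
    (h : ∀ u v,
      Φ (mul (single u 1) (single v 1)) = Φ (single u 1) * Φ (single v 1))
    (x y : ι →₀ R) : Φ (mul x y) = Φ x * Φ y := by
  have : mul.compr₂ Φ = (LinearMap.mul R B).compl₁₂ Φ Φ :=
    lhom_ext' fun u => LinearMap.ext_ring <| lhom_ext' fun v => LinearMap.ext_ring (h u v)
  exact LinearMap.congr_fun₂ this x y

section CommSemiring

variable {R M N : Type*} [CommSemiring R] [AddCommMonoid M] [Module R M] [AddCommMonoid N]
  [Module R N]

theorem LinearMap.exists_add_flip_eq [Module.Free R M] (b : M →ₗ[R] M →ₗ[R] N)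
    (hsymm : ∀ u v, b u v = b v u) (halt : ∀ v, b v v = 0) :
    ∃ B : M →ₗ[R] M →ₗ[R] N, B + B.flip = b := by
  let e := Module.Free.chooseBasis R M
  let : LinearOrder (Module.Free.ChooseBasisIndex R M) :=
    IsWellOrder.linearOrder WellOrderingRel
  refine ⟨e.constr R fun i => e.constr R fun j => if i < j then b (e i) (e j) else 0,
    e.ext fun i => e.ext fun j => ?_⟩
  rcases lt_trichotomy i j with h | rfl | h
  · simp [h, h.not_gt]
  · simp [halt]
  · simp [h, h.not_gt, hsymm]

abbrev QuadraticRefinement (b : M →ₗ[R] M →ₗ[R] N) :=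
  {q : M → N // ∀ u v, q (u + v) = q u + q v + b u v}

theorem QuadraticRefinement.nonempty [Module.Free R M] (b : M →ₗ[R] M →ₗ[R] N)
    (hsymm : ∀ u v, b u v = b v u) (halt : ∀ v, b v v = 0) :
    Nonempty (QuadraticRefinement b) := by
  obtain ⟨B, rfl⟩ := b.exists_add_flip_eq hsymm halt
  exact ⟨⟨fun v => B v v, fun u v => by simp; abel⟩⟩

end CommSemiring

namespace QuadraticRefinement

section AddCommGroup

variable {R M N : Type*} [CommRing R] [AddCommGroup M] [Module R M] [AddCommGroup N] [Module R N]
  {b : M →ₗ[R] M →ₗ[R] N}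

theorem map_zero (q : QuadraticRefinement b) : q.1 0 = 0 := by
  simpa using q.2 0 0

def vaddEquiv (q₀ : QuadraticRefinement b) : (M →+ N) ≃ QuadraticRefinement b where
  toFun ℓ := ⟨ℓ + q₀.1, fun u v => by simp [q₀.2]; abel⟩
  invFun q := AddMonoidHom.mk' (q.1 - q₀.1) fun u v => by simp [q.2, q₀.2]; abel
  left_inv ℓ := by ext; simp
  right_inv q := by ext; simp

end AddCommGroup

variable {V : Type*} [AddCommGroup V] [Module (ZMod 2) V]
  {b : V →ₗ[ZMod 2] V →ₗ[ZMod 2] ZMod 2}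

def dualEquiv (q₀ : QuadraticRefinement b) : Module.Dual (ZMod 2) V ≃ QuadraticRefinement b :=
  (AddMonoidHom.toZModLinearMapEquiv 2).symm.toEquiv.trans q₀.vaddEquiv

@[simp]
theorem dualEquiv_apply_coe (q₀ : QuadraticRefinement b) (ℓ : Module.Dual (ZMod 2) V) (v : V) :
    (q₀.dualEquiv ℓ).1 v = ℓ v + q₀.1 v :=
  rfl

theorem sgnC_mul_sgnC (q : QuadraticRefinement b) (u v : V) :
    sgnC (q.1 u) * sgnC (q.1 v) = sgnC (b u v) * sgnC (q.1 (u + v)) := by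
  rw [q.2, sgnC_add, sgnC_add]
  linear_combination -(sgnC (q.1 u) * sgnC (q.1 v)) * sgnC_mul_self (b u v)

theorem natCard_eq [FiniteDimensional (ZMod 2) V] (q₀ : QuadraticRefinement b) :
    Nat.card (QuadraticRefinement b) = Nat.card V :=
  (Nat.card_congr q₀.dualEquiv.symm).trans
    (Nat.card_congr (Module.finBasis (ZMod 2) V).toDualEquiv.toEquiv.symm)

theorem linearIndependent_sgnC [FiniteDimensional (ZMod 2) V] (q₀ : QuadraticRefinement b) :
    LinearIndependent ℂ fun v (q : QuadraticRefinement b) => sgnC (q.1 v) := by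
  have : Finite (Module.Dual (ZMod 2) V) := Module.finite_of_finite (ZMod 2)
  let χ (v : V) : AddChar (Module.Dual (ZMod 2) V) ℂ :=
    sgnChar.compAddMonoidHom (Module.Dual.eval (ZMod 2) V v).toAddMonoidHom
  have hχ : Function.Injective χ := fun u v huv =>
    Module.eval_apply_injective (ZMod 2) <| LinearMap.ext fun ℓ =>
      sgnC_injective <| DFunLike.congr_fun huv ℓ
  let c (v : V) : ℂˣ := Units.mk0 (sgnC (q₀.1 v)) (sgnC_ne_zero _)
  have hcomp : (LinearEquiv.funCongrLeft ℂ ℂ q₀.dualEquiv).toLinearMap ∘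
      (fun v (q : QuadraticRefinement b) => sgnC (q.1 v)) = c • ((⇑) ∘ χ) := by
    ext v ℓ
    simp [c, χ, sgnChar, sgnC_add, mul_comm]
  exact .of_comp _ <| hcomp ▸ ((AddChar.linearIndependent _ ℂ).comp χ hχ).units_smul c

theorem bijective_linearCombination_sgnC [FiniteDimensional (ZMod 2) V]
    (q₀ : QuadraticRefinement b) :
    Function.Bijective
      (Finsupp.linearCombination ℂ fun v (q : QuadraticRefinement b) => sgnC (q.1 v)) := by
  have : Finite V := Module.finite_of_finite (ZMod 2)
  have : Fintype V := Fintype.ofFinite V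
  have : Fintype (QuadraticRefinement b) := Fintype.ofFinite _
  refine ⟨q₀.linearIndependent_sgnC, (LinearMap.injective_iff_surjective_of_finrank_eq_finrank
    ?_).1 q₀.linearIndependent_sgnC⟩
  rw [Module.finrank_finsupp_self, Module.finrank_fintype_fun_eq_card,
    ← Nat.card_eq_fintype_card, ← Nat.card_eq_fintype_card, q₀.natCard_eq]

end QuadraticRefinement

/-- for a symmetric alternating bilinear form `b` on a
finite-dimensional `ℤ/2`-vector space `V`, the linear map from the intersection
algebra `A(V,b)` to `ℂ^Q` (where `Q` is the set of quadratic refinements of `b`)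
sending `[v]` to `((-1)^{q v})_{q ∈ Q}` is an isomorphism of unital
ℂ-algebras. -/
theorem intersection_algebra_iso_functions_on_refinements
    (V : Type*) [AddCommGroup V] [Module (ZMod 2) V]
    [FiniteDimensional (ZMod 2) V]
    (b : V →ₗ[ZMod 2] V →ₗ[ZMod 2] ZMod 2)
    (hsymm : ∀ u v : V, b u v = b v u)
    (halt : ∀ v : V, b v v = 0)
    (mul : (V →₀ ℂ) →ₗ[ℂ] (V →₀ ℂ) →ₗ[ℂ] (V →₀ ℂ))
    (hmul : ∀ u v : V, mul (Finsupp.single u 1) (Finsupp.single v 1)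
      = sgnC (b u v) • Finsupp.single (u + v) (1 : ℂ)) :
    let Q := {q : V → ZMod 2 // ∀ u v : V, q (u + v) = q u + q v + b u v}
    let Φ : (V →₀ ℂ) →ₗ[ℂ] (Q → ℂ) :=
      Finsupp.linearCombination ℂ (fun v => fun q : Q => sgnC (q.1 v))
    Function.Bijective Φ ∧
    (∀ x y : V →₀ ℂ, Φ (mul x y) = Φ x * Φ y) ∧
    Φ (Finsupp.single 0 1) = 1 := by
  intro Q Φ
  obtain ⟨q₀⟩ := QuadraticRefinement.nonempty b hsymm halt
  refine ⟨q₀.bijective_linearCombination_sgnC, ?_, ?_⟩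
  · refine Finsupp.map_bilin_eq_mul_of_single mul Φ fun u v =>
      funext fun (q : QuadraticRefinement b) => ?_
    simp [Φ, hmul, q.sgnC_mul_sgnC]
  · funext (q : QuadraticRefinement b)
    simp [Φ, q.map_zero, sgnC]
end

section
/- Fix real numbers τ_a, τ_b, τ_c, τ_d, τ_e with sin τ_e ≠ 0, and for real ℏ (small enough that sin(τ_e+ℏ) ≠ 0 and sin(τ_e−ℏ) ≠ 0) define I(ℏ) = 2cos(τ_c+τ_d−ℏ) + 4·[sin((τ_a+τ_d−τ_e−ℏ)/2)·sin((τ_a−τ_d+τ_e+ℏ)/2)·sin((τ_b+τ_c−τ_e−ℏ)/2)·sin((τ_b−τ_c+τ_e+ℏ)/2)]/(sin(τ_e)·sin(τ_e+ℏ)) + 4·[sin((τ_a+τ_d+τ_e−ℏ)/2)·sin((−τ_a+τ_d+τ_e−ℏ)/2)·sin((τ_b+τ_c+τ_e−ℏ)/2)·sin((−τ_b+τ_c+τ_e−ℏ)/2)]/(sin(τ_e)·sin(τ_e−ℏ)). Then the limit of (I(ℏ) − I(0))/ℏ as ℏ → 0 is 0; equivalently, I(ℏ) = I(0) + o(ℏ),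 i.e., the first-order term in ℏ of I vanishes. -/
/-!
Product-to-sum turns each product of four sines in `I(ℏ)` into a product of two differences
of cosines, so `I` is differentiable at `0` (as `sin τe ≠ 0`); differentiating and expanding
with the angle-addition formulas, the derivative `I'(0)` cancels to `0`.
-/

open Real Filter

/-- The function `I(ℏ)` appearing as the constant Fourier coefficient of the
ψ-symbol of the curve `Dₑ` joining two distinct trivalent vertices. -/
noncomputable def I8 (τa τb τc τd τe h : ℝ) : ℝ :=
  2 * Real.cos (τc + τd - h)
  + 4 * (Real.sin ((τa + τd - τe - h) / 2) * Real.sin ((τa - τd + τe + h) / 2)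
      * Real.sin ((τb + τc - τe - h) / 2) * Real.sin ((τb - τc + τe + h) / 2))
      / (Real.sin τe * Real.sin (τe + h))
  + 4 * (Real.sin ((τa + τd + τe - h) / 2) * Real.sin ((-τa + τd + τe - h) / 2)
      * Real.sin ((τb + τc + τe - h) / 2) * Real.sin ((-τb + τc + τe - h) / 2))
      / (Real.sin τe * Real.sin (τe - h))

lemma four_mul_sin_mul_sin_mul_sin_mul_sin (p q r s : ℝ) :
    4 * (sin p * sin q * sin r * sin s)
      = (cos (p - q) - cos (p + q)) * (cos (r - s) - cos (r + s)) := by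
  rw [cos_sub, cos_add, cos_sub, cos_add]
  ring

lemma I8_eq_cos_form (τa τb τc τd τe h : ℝ) :
    I8 τa τb τc τd τe h = 2 * cos (τc + τd - h)
      + (cos (τd - τe - h) - cos τa) * (cos (τc - τe - h) - cos τb) / (sin τe * sin (τe + h))
      + (cos (τd + τe - h) - cos τa) * (cos (τc + τe - h) - cos τb)
          / (sin τe * sin (τe - h)) := by
  rw [I8, four_mul_sin_mul_sin_mul_sin_mul_sin, four_mul_sin_mul_sin_mul_sin_mul_sin]
  ring_nf

lemma hasDerivAt_cos_sub_sub_mul_cos_sub_sub (α β A B : ℝ) :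
    HasDerivAt (fun h => (cos (α - h) - A) * (cos (β - h) - B))
      (sin α * (cos β - B) + (cos α - A) * sin β) 0 := by
  have hα := ((hasDerivAt_id (0 : ℝ)).const_sub α).cos.sub_const A
  have hβ := ((hasDerivAt_id (0 : ℝ)).const_sub β).cos.sub_const B
  exact (hα.mul hβ).congr_deriv (by simp)

lemma hasDerivAt_sin_mul_sin_add (e : ℝ) :
    HasDerivAt (fun h => sin e * sin (e + h)) (sin e * cos e) 0 := by
  simpa using (((hasDerivAt_id (0 : ℝ)).const_add e).sin).const_mul (sin e)

lemma hasDerivAt_sin_mul_sin_sub (e : ℝ) :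
    HasDerivAt (fun h => sin e * sin (e - h)) (-(sin e * cos e)) 0 := by
  simpa using (((hasDerivAt_id (0 : ℝ)).const_sub e).sin).const_mul (sin e)

lemma hasDerivAt_I8_zero (τa τb τc τd τe : ℝ) (hτe : sin τe ≠ 0) :
    HasDerivAt (I8 τa τb τc τd τe) 0 0 := by
  have hden : sin τe * sin τe ≠ 0 := mul_ne_zero hτe hτe
  have hcos : HasDerivAt (fun h => 2 * cos (τc + τd - h)) (2 * sin (τc + τd)) 0 := by
    simpa using (((hasDerivAt_id (0 : ℝ)).const_sub (τc + τd)).cos).const_mul (2 : ℝ)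
  have hfrac₁ := (hasDerivAt_cos_sub_sub_mul_cos_sub_sub (τd - τe) (τc - τe) (cos τa) (cos τb)).div
    (hasDerivAt_sin_mul_sin_add τe) (by simpa using hden)
  have hfrac₂ := (hasDerivAt_cos_sub_sub_mul_cos_sub_sub (τd + τe) (τc + τe) (cos τa) (cos τb)).div
    (hasDerivAt_sin_mul_sin_sub τe) (by simpa using hden)
  rw [funext (I8_eq_cos_form τa τb τc τd τe)]
  refine ((hcos.add hfrac₁).add hfrac₂).congr_deriv ?_
  simp only [add_zero, sub_zero]
  field_simp
  simp only [sin_add, sin_sub, cos_add, cos_sub]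
  ring

/-- the first-order term in `ℏ` of `I` vanishes:
`(I(ℏ) − I(0))/ℏ → 0` as `ℏ → 0`. -/
theorem first_order_of_I_vanishes (τa τb τc τd τe : ℝ) (hτe : Real.sin τe ≠ 0) :
    Tendsto (fun h : ℝ => (I8 τa τb τc τd τe h - I8 τa τb τc τd τe 0) / h)
      (nhdsWithin 0 {0}ᶜ) (nhds 0) := by
  simpa [div_eq_inv_mul] using
    hasDerivAt_iff_tendsto_slope_zero.mp (hasDerivAt_I8_zero τa τb τc τd τe hτe)
end
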